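/- Let q > 2 be a prime power, n ≥ 2, S ⊆ 𝔽_q^n \ {0} a symmetric set closed under nonzero scalar multiplication such that Aut(Cay(𝔽_q^n, S)) = 𝔽_q^n ⋊ 𝔽_q^* and such that some proper q-coloring of Cay(𝔽_q^n, S) exists. Suppose C₀,...,C_{q-1} is a proper q-coloring, and define a (q+1)-coloring by removing 0 from its class and giving it a new color. If every non-identity automorphism x ↦ λx + b that fixes all classes of the new coloring must satisfy b = 0, and x and λx are never in the same original color class unless λ = 1 (hypothesis: each Cᵢ is a coset of a hyperplane not containing any x and λx simultaneously for λ ≠ 1, x ≠ 0), then the new (q+1)-coloring is proper and distinguishing; hence χ_D(Cay(𝔽_q^n, S)) ≤ q + 1. -/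

import Mathlib

def Cay {V : Type*} [AddCommGroup V] (S : Set V) : SimpleGraph V where
  Adj u v := u ≠ v ∧ (u - v ∈ S ∨ v - u ∈ S)
  symm := ⟨fun u v h => ⟨h.1.symm, h.2.symm⟩⟩
  loopless := ⟨fun u h => h.1 rfl⟩

/-- The distinguishing chromatic number. -/
noncomputable def chiD {V : Type*} (G : SimpleGraph V) : ℕ :=
  sInf {r : ℕ | ∃ c : G.Coloring (Fin r),
    ∀ φ : G ≃g G, (∀ v, c (φ v) = c v) → ∀ v, φ v = v}

/-!
Since `S` avoids the hyperplane `x_last = 0`, every edge changes the last coordinate, so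
colouring by `x_last / v_last` is proper, and so is its refinement that isolates `0`. An affine
automorphism `x ↦ λ • x + b` preserving the refined colouring fixes `0`, the only vertex of its
colour, hence `b = 0`; preserving the colour of `v` then reads `λ * v_last = v_last`, so `λ = 1`.
-/

open SimpleGraph

theorem Cay.map_ne_of_adj {V W : Type*} [AddCommGroup V] [AddCommGroup W] {S : Set V}
    (f : V →+ W) (hS : ∀ s ∈ S, f s ≠ 0) {x y : V} (h : (Cay S).Adj x y) : f x ≠ f y := by
  rw [Ne, ← sub_eq_zero, ← map_sub]
  rcases h.2 with hxy | hyx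
  · exact hS _ hxy
  · rw [← neg_sub, map_neg, neg_eq_zero]
    exact hS _ hyx

theorem chiD_le_card {V α : Type*} [Fintype α] {G : SimpleGraph V} (c : G.Coloring α)
    (hc : ∀ φ : G ≃g G, (∀ v, c (φ v) = c v) → ∀ v, φ v = v) :
    chiD G ≤ Fintype.card α := by
  let e := Fintype.equivFin α
  exact Nat.sInf_le ⟨Coloring.mk (fun x => e (c x)) fun h he => c.valid h (e.injective he),
    fun φ hφ => hc φ fun x => e.injective (hφ x)⟩

section Recolor

variable {V α : Type*} [DecidableEq V]

def recolor (c : V → α) (z : V) (x : V) : Option α :=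
  if x = z then none else some (c x)

theorem recolor_ne_of_adj {G : SimpleGraph V} {c : V → α}
    (hc : ∀ x y, G.Adj x y → c x ≠ c y) (z : V) {x y : V} (h : G.Adj x y) :
    recolor c z x ≠ recolor c z y := by
  unfold recolor
  split_ifs with hx hy hy
  · exact (G.ne_of_adj h (hx.trans hy.symm)).elim
  · simp
  · simp
  · exact fun hxy => hc x y h (Option.some_inj.mp hxy)

theorem recolor_comp_eq {c : V → α} {z : V} {φ : V → V}
    (hφ : ∀ x, recolor c z (φ x) = recolor c z x) :
    φ z = z ∧ ∀ x, x ≠ z → c (φ x) = c x := by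
  refine ⟨?_, fun x hx => ?_⟩
  · by_contra h
    simpa [recolor, h] using hφ z
  · have := hφ x
    unfold recolor at this
    split_ifs at this with h
    exact Option.some_inj.mp this

end Recolor

theorem smul_add_eq_self_of_fixes_zero {F V : Type*} [Field F] [AddCommGroup V] [Module F V]
    (f : V →ₗ[F] F) {v : V} (hv : f v ≠ 0) {lam : F} {b : V}
    (h0 : lam • (0 : V) + b = 0) (hfv : f (lam • v + b) = f v) (x : V) :
    lam • x + b = x := by
  rw [smul_zero, zero_add] at h0
  subst h0
  rw [add_zero, map_smul, smul_eq_mul] at hfv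
  rw [mul_left_eq_self₀.mp hfv |>.resolve_right hv, one_smul, add_zero]

/-- `q > 2`, `S` a union of punctured lines avoiding the hyperplane `H₀`,
the automorphism group of `Cay(𝔽_q^n, S)` consists of the affine maps `x ↦ lam • x + b`.
The original proper `q`-coloring has as classes the cosets of `H₀` (the class of `x` is
determined by `x_last / v_last` for a fixed `v ∈ S` with nonzero last coordinate); the
modified `(q+1)`-coloring `c'` recolors the vertex `0` with a brand-new color. Then `c'`
is proper and distinguishing, and hence `χ_D(Cay(𝔽_q^n, S)) ≤ q + 1`. -/
theorem stmt18 (F : Type*) [Field F] [Fintype F] [DecidableEq F] (n : ℕ) (hn : 2 ≤ n)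
    (S : Set (Fin n → F))
    (hAut : ∀ φ : Cay S ≃g Cay S,
      ∃ (lam : F) (b : Fin n → F), lam ≠ 0 ∧ ∀ x, φ x = lam • x + b)
    (v : Fin n → F) (hvlast : v ⟨n - 1, by omega⟩ ≠ 0)
    (hH0S : ∀ s ∈ S, s ⟨n - 1, by omega⟩ ≠ 0)
    (c' : (Fin n → F) → Option F)
    (hc' : ∀ x : Fin n → F, c' x =
      if x = 0 then none
      else some (x ⟨n - 1, by omega⟩ / v ⟨n - 1, by omega⟩)) :
    (∀ x y : Fin n → F, (Cay S).Adj x y → c' x ≠ c' y) ∧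
    (∀ φ : Cay S ≃g Cay S, (∀ x, c' (φ x) = c' x) → ∀ x, φ x = x) ∧
    chiD (Cay S) ≤ Fintype.card F + 1 := by
  set last : Fin n := ⟨n - 1, by omega⟩
  let f : (Fin n → F) →ₗ[F] F := LinearMap.proj last
  have hc'_eq : c' = recolor (fun x => f x / v last) 0 := funext hc'
  have hproper : ∀ x y, (Cay S).Adj x y → c' x ≠ c' y := by
    intro x y h
    rw [hc'_eq]
    refine recolor_ne_of_adj (fun x y h => ?_) 0 h
    exact (div_left_inj' hvlast).not.mpr (Cay.map_ne_of_adj f.toAddMonoidHom hH0S h)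
  have hdist : ∀ φ : Cay S ≃g Cay S, (∀ x, c' (φ x) = c' x) → ∀ x, φ x = x := by
    intro φ hφ x
    obtain ⟨lam, b, -, hφ_eq⟩ := hAut φ
    rw [hc'_eq] at hφ
    obtain ⟨hφ0, hφc⟩ := recolor_comp_eq hφ
    have hv0 : v ≠ 0 := fun h => hvlast (congrFun h last)
    have hfv := (div_left_inj' hvlast).mp (hφc v hv0)
    rw [hφ_eq] at hφ0 hfv ⊢
    exact smul_add_eq_self_of_fixes_zero f hvlast hφ0 hfv x
  refine ⟨hproper, hdist, ?_⟩
  rw [← Fintype.card_option]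
  exact chiD_le_card (Coloring.mk c' fun h => hproper _ _ h) hdist
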